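/- Let A be a left brace of cardinality p^n such that p^i A is an ideal of A for every i. If c_1, …, c_m ∈ A satisfy c_t ∈ p^{j_t} A, then any product (under the operation *, with any bracketing and interspersed with arbitrary elements of A) involving all of c_1, …, c_m lies in p^{j_1 + ⋯ + j_m} A. -/
import Mathlib


universe u

class LeftBrace (A : Type u) extends AddCommGroup A where
  circ : A → A → A
  circ_assoc : ∀ a b c : A, circ (circ a b) c = circ a (circ b c)
  zero_circ : ∀ a : A, circ 0 a = a
  circ_zero : ∀ a : A, circ a 0 = a
  cinv : A → A
  cinv_circ : ∀ a : A, circ (cinv a) a = 0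
  circ_add : ∀ a b c : A, circ a (b + c) + a = circ a b + circ a c

namespace LeftBrace

variable {A : Type u} [LeftBrace A]

/-- `a * b = a∘b - a - b`. -/
def star (a b : A) : A := circ a b - a - b

/-- `cpow a j` is the `j`-th power of `a` in the group `(A, ∘)` (whose identity is `0`). -/
def cpow (a : A) : ℕ → A
  | 0 => 0
  | n+1 => circ a (cpow a n)

/-- `eFun a i = e_{i+1}(a)`: `eFun a 0 = a`, `eFun a (i+1) = a * eFun a i`. -/
def eFun (a : A) : ℕ → A
  | 0 => a
  | i+1 => star a (eFun a i)

/-- `eStar a b i = e_{i+1}'(a,b)`: `eStar a b 0 = a*b`, `eStar a b (i+1) = a * eStar a b i`. -/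
def eStar (a b : A) : ℕ → A
  | 0 => star a b
  | i+1 => star a (eStar a b i)

/-- `nSet A m = mA = {m a : a ∈ A}`. -/
def nSet (A : Type u) [LeftBrace A] (m : ℕ) : Set A := {x | ∃ a : A, m • a = x}

/-- `annSet A m = ann(m) = {a ∈ A : m a = 0}`. -/
def annSet (A : Type u) [LeftBrace A] (m : ℕ) : Set A := {a : A | m • a = 0}

/-- An ideal of a brace: an additive subgroup closed under `i*a` and `a*i`. -/
def IsBraceIdeal (I : Set A) : Prop :=
  0 ∈ I ∧ (∀ x ∈ I, ∀ y ∈ I, x + y ∈ I) ∧ (∀ x ∈ I, -x ∈ I) ∧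
    ∀ x ∈ I, ∀ a : A, star x a ∈ I ∧ star a x ∈ I

/-- Property 1': `e'_{⌊(p-1)/4⌋}(a,b) ∈ pA` for all `a, b`. -/
def Prop1' (A : Type u) [LeftBrace A] (p : ℕ) : Prop :=
  ∀ a b : A, eStar a b ((p-1)/4 - 1) ∈ nSet A p

/-- Property 1'': `e'_{⌊(p-1)/4⌋}(a, ann(p^i)) ⊆ ann(p^{i-1})` for all `i ≥ 1`. -/
def Prop1'' (A : Type u) [LeftBrace A] (p : ℕ) : Prop :=
  ∀ i : ℕ, 1 ≤ i → ∀ a x : A, (p^i) • x = 0 →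
    (p^(i-1)) • eStar a x ((p-1)/4 - 1) = 0

end LeftBrace

namespace LeftBrace

/-- `MarkedProd c s z`: `z` is a product (under `*`, any bracketing) involving the
distinguished elements `c t` for `t ∈ s` exactly once each, interspersed with
arbitrary elements of `A`. -/
inductive MarkedProd {A : Type u} [LeftBrace A] {m : ℕ} (c : Fin m → A) :
    Finset (Fin m) → A → Prop
  | free (a : A) : MarkedProd c ∅ a
  | mark (t : Fin m) : MarkedProd c {t} (c t)
  | mul {s u : Finset (Fin m)} {x y : A} (h : Disjoint s u) :
      MarkedProd c s x → MarkedProd c u y → MarkedProd c (s ∪ u) (star x y)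

end LeftBrace

namespace LeftBrace

variable {A : Type u} [LeftBrace A]

lemma star_add_right' (a b c : A) : star a (b + c) = star a b + star a c := by
  have h := circ_add a b c
  simp only [star]
  rw [show circ a (b + c) = circ a b + circ a c - a from by
    rw [← h]; abel]
  abel

lemma star_zero_right' (a : A) : star a 0 = 0 := by
  simp [star, circ_zero]

lemma star_nsmul_right' (a : A) (k : ℕ) (b : A) :
    star a (k • b) = k • star a b := by
  induction k with
  | zero => simp [star_zero_right']
  | succ k ih => rw [succ_nsmul, star_add_right', ih, succ_nsmul]

lemma star_mem_nSet {p : ℕ} (hideal : ∀ i : ℕ, IsBraceIdeal (nSet A (p ^ i)))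
    {i k : ℕ} {x y : A} (hx : x ∈ nSet A (p ^ i)) (hy : y ∈ nSet A (p ^ k)) :
    star x y ∈ nSet A (p ^ (i + k)) := by
  obtain ⟨b, hb⟩ := hy
  obtain ⟨a', ha'⟩ := ((hideal i).2.2.2 x hx b).1
  refine ⟨a', ?_⟩
  rw [← hb, star_nsmul_right', ← ha', smul_smul, mul_comm, pow_add]

end LeftBrace

open LeftBrace in
/-- if every `p^i A` is an ideal and `c_t ∈ p^{j_t} A`, then any `*`-product
involving all of `c_1, …, c_m` (any bracketing, interspersed with arbitrary elements of `A`)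
lies in `p^{j_1 + ⋯ + j_m} A`. -/
theorem statement13 {A : Type u} [LeftBrace A] (p n : ℕ) (hp : p.Prime)
    (hcard : Nat.card A = p ^ n)
    (hideal : ∀ i : ℕ, IsBraceIdeal (nSet A (p ^ i)))
    (m : ℕ) (j : Fin m → ℕ) (c : Fin m → A) (hc : ∀ t, c t ∈ nSet A (p ^ j t)) :
    ∀ z : A, MarkedProd c Finset.univ z → z ∈ nSet A (p ^ (∑ t, j t)) := by
  suffices H : ∀ (s : Finset (Fin m)) (z : A), MarkedProd c s z →
      z ∈ nSet A (p ^ (∑ t ∈ s, j t)) from fun z hz => H Finset.univ z hz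
  intro s z hz
  induction hz with
  | free a => exact ⟨a, by simp⟩
  | mark t => simpa using hc t
  | mul h hx hy ihx ihy =>
    rw [Finset.sum_union h]
    exact star_mem_nSet hideal ihx ihy
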